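/- arXiv:math/0011128 — 2 statements merged into one kernel-verified Lean document; each statement's English description precedes it below -/
import Mathlib

section
/- Given three non-collinear points p₁,p₂,p₃ in the plane and real numbers c₁, c₂, there exists exactly one point p₄ ∈ ℝ² with a(p₂,p₃,p₄) = c₁ and a(p₁,p₂,p₄) = c₂, where a(x,y,z) = (1/2)det[y-x, z-x] is the signed triangle area. (Fourth point reductivity for the equi-affine signature.) -/
/-- Determinant of the 2×2 matrix with columns `u`, `w` in `ℝ × ℝ`. -/
noncomputable def detR (u w : ℝ × ℝ) : ℝ := u.1 * w.2 - u.2 * w.1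

/-- Signed area `a(x,y,z) = (1/2) det[y - x, z - x]`. -/
noncomputable def areaR (x y z : ℝ × ℝ) : ℝ := (1 / 2) * detR (y - x) (z - x)

/-- Fourth point reductivity for the equi-affine signature: given non-collinear `p₁, p₂, p₃`
and reals `c₁, c₂`, there is exactly one `p₄` with `a(p₂,p₃,p₄) = c₁` and `a(p₁,p₂,p₄) = c₂`. -/
theorem stmt11 (p₁ p₂ p₃ : ℝ × ℝ) (h : areaR p₁ p₂ p₃ ≠ 0) (c₁ c₂ : ℝ) :
    ∃! p₄ : ℝ × ℝ, areaR p₂ p₃ p₄ = c₁ ∧ areaR p₁ p₂ p₄ = c₂ := by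
  simp only [areaR, detR, Prod.fst_sub, Prod.snd_sub, ne_eq] at *
  set D : ℝ := (p₃.1 - p₂.1) * (p₂.2 - p₁.2) - (p₃.2 - p₂.2) * (p₂.1 - p₁.1) with hDdef
  have hD : D ≠ 0 := by
    intro h0
    apply h
    rw [hDdef] at h0
    nlinarith [h0]
  set b₁ : ℝ := 2 * c₁ + (p₃.1 - p₂.1) * p₂.2 - (p₃.2 - p₂.2) * p₂.1 with hb1
  set b₂ : ℝ := 2 * c₂ + (p₂.1 - p₁.1) * p₁.2 - (p₂.2 - p₁.2) * p₁.1 with hb2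
  refine ⟨((b₁ * (p₂.1 - p₁.1) - b₂ * (p₃.1 - p₂.1)) / D,
           (b₁ * (p₂.2 - p₁.2) - b₂ * (p₃.2 - p₂.2)) / D), ⟨?_, ?_⟩, ?_⟩
  · field_simp
    ring
  · field_simp
    ring
  · rintro ⟨x, y⟩ ⟨h1, h2⟩
    simp only [Prod.mk.injEq]
    constructor
    · field_simp
      linear_combination (2 * (p₂.1 - p₁.1)) * h1 - (2 * (p₃.1 - p₂.1)) * h2
    · field_simp
      linear_combination (2 * (p₂.2 - p₁.2)) * h1 - (2 * (p₃.2 - p₂.2)) * h2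
end

section
/- Suppose I₁,...,I_m : (ℝ²)ⁿ → ℝ are G-invariant functions for a group G acting diagonally on (ℝ²)ⁿ, such that (i) whenever all the cyclically shifted invariant values of two k-tuples (p₁,...,p_k) and (q₁,...,q_k) agree, there is g ∈ G with g·(p₁,...,p_{n-1}) = (q₁,...,q_{n-1}) [(n-1)-point projectability], and (ii) for fixed p₁,...,p_{n-1}, the point p_n is uniquely determined by the values I₁(p₁,...,p_n),...,I_m(p₁,...,p_n) [n-th point reductivity]. Then for k ≥ n, any two k-tuples whose full cyclic signatures {(I_i(p_r,...,p_{r+n-1}))_i}_{r=1}^k (indices mod k) coincide are related by an element of G: there exists g ∈ G with g·p_r = q_r for all r. -/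
/-- Perfect invariants give complete signatures: if `n`-point joint invariants `I₁, …, I_m`
are `(n-1)`-point projectable (i) and `n`-th point reductive (ii), then any two `k`-tuples
(indices mod `k`, `k ≥ n`) with equal full cyclic signatures are related by a group element. -/
theorem stmt19 {G : Type*} [Group G] [MulAction G ℂ]
    (n m k : ℕ) (hn : 1 ≤ n) (hk : n ≤ k) [NeZero k]
    (I : Fin m → (Fin n → ℂ) → ℝ)
    (hinv : ∀ (g : G) (i : Fin m) (p : Fin n → ℂ), I i (fun j => g • p j) = I i p)
    (hproj : ∀ p q : ZMod k → ℂ,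
      (∀ (r : ZMod k) (i : Fin m),
          I i (fun j : Fin n => p (r + ((j : ℕ) : ZMod k))) =
            I i (fun j : Fin n => q (r + ((j : ℕ) : ZMod k)))) →
      ∃ g : G, ∀ j : ℕ, j < n - 1 → g • p ((j : ℕ) : ZMod k) = q ((j : ℕ) : ZMod k))
    (hred : ∀ x y : Fin n → ℂ,
      (∀ j : Fin n, (j : ℕ) < n - 1 → x j = y j) →
      (∀ i : Fin m, I i x = I i y) → x = y)
    (p q : ZMod k → ℂ)
    (hsig : ∀ (r : ZMod k) (i : Fin m),
      I i (fun j : Fin n => p (r + ((j : ℕ) : ZMod k))) =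
        I i (fun j : Fin n => q (r + ((j : ℕ) : ZMod k)))) :
    ∃ g : G, ∀ r : ZMod k, g • p r = q r := by
  obtain ⟨g, hg⟩ := hproj p q hsig
  refine ⟨g, ?_⟩
  have key : ∀ j : ℕ, g • p ((j : ℕ) : ZMod k) = q ((j : ℕ) : ZMod k) := by
    intro j
    induction j using Nat.strong_induction_on with
    | _ j ih =>
      by_cases hj : j < n - 1
      · exact hg j hj
      · push_neg at hj
        set r : ℕ := j - (n - 1) with hr
        have hj' : j = r + (n - 1) := by omega
        have heq : (fun i : Fin n => g • p (((r : ℕ) : ZMod k) + ((i : ℕ) : ZMod k)))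
            = fun i : Fin n => q (((r : ℕ) : ZMod k) + ((i : ℕ) : ZMod k)) := by
          apply hred
          · intro i hi
            have : ((r : ℕ) : ZMod k) + ((i : ℕ) : ZMod k) = ((r + (i : ℕ) : ℕ) : ZMod k) := by
              push_cast; ring
            rw [this]
            exact ih (r + (i : ℕ)) (by omega)
          · intro i
            rw [hinv g i (fun i : Fin n => p (((r : ℕ) : ZMod k) + ((i : ℕ) : ZMod k)))]
            exact hsig ((r : ℕ) : ZMod k) i
        have := congrFun heq ⟨n - 1, by omega⟩
        simpa [hj', Nat.cast_add] using this
  intro r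
  have : ((r.val : ℕ) : ZMod k) = r := ZMod.natCast_zmod_val r
  rw [← this]; exact key r.val
end
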